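/- For every r ≥ r₊, h′(r) − a²/(a² + r²) > 1 + 3M/r. In particular h′(r) > 0 for all r ≥ r₊. -/

import Mathlib

/-!
Differentiating term by term,
`h′(r) = 2 + 4M/r + 6M²(r − r₊)/r³ − 2Mk/(r² + k²)` with `k = (C꜀ − 1)M`.
By AM-GM, `2kr ≤ r² + k²`, so the arctan term costs at most `M/r`, and the middle term is
nonnegative for `r ≥ r₊`. Hence `h′(r) ≥ 2 + 3M/r`, while `a²/(a² + r²) < 1`.
-/

/-- The radius `r₊ = M + √(M² − a²)` of the Kerr event horizon. -/
noncomputable def rplus (M a : ℝ) : ℝ := M + Real.sqrt (M ^ 2 - a ^ 2)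

/-- The height function `h` defining the hyperboloidal time function `τ = v − h(r)`. -/
noncomputable def hKerr (M a Cc : ℝ) (r : ℝ) : ℝ :=
  2 * (r - rplus M a) + 4 * M * Real.log (r / rplus M a)
    + 3 * M ^ 2 * (rplus M a - r) ^ 2 / (rplus M a * r ^ 2)
    + 2 * M * Real.arctan ((Cc - 1) * M / r)
    - 2 * M * Real.arctan ((Cc - 1) * M / rplus M a)

lemma rplus_pos {M : ℝ} (hM : 0 < M) (a : ℝ) : 0 < rplus M a :=
  add_pos_of_pos_of_nonneg hM (Real.sqrt_nonneg _)

lemma hasDerivAt_hKerr (M a Cc : ℝ) {r : ℝ} (hrp : rplus M a ≠ 0) (hr : r ≠ 0) :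
    HasDerivAt (hKerr M a Cc)
      (2 + 4 * M / r + 6 * M ^ 2 * (r - rplus M a) / r ^ 3
        - 2 * M * ((Cc - 1) * M) / (r ^ 2 + ((Cc - 1) * M) ^ 2)) r := by
  have hlin : HasDerivAt (fun x : ℝ => 2 * (x - rplus M a)) 2 r := by
    simpa using ((hasDerivAt_id r).sub_const (rplus M a)).const_mul 2
  have hlog := (((hasDerivAt_id r).div_const (rplus M a)).log
      (div_ne_zero hr hrp)).const_mul (4 * M)
  have hrat := ((((hasDerivAt_const r (rplus M a)).sub (hasDerivAt_id r)).pow 2).const_mul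
      (3 * M ^ 2)).div ((hasDerivAt_pow 2 r).const_mul (rplus M a)) (by positivity)
  have harctan := ((hasDerivAt_const r ((Cc - 1) * M)).div (hasDerivAt_id r) hr).arctan.const_mul
      (2 * M)
  have hsum : HasDerivAt (hKerr M a Cc) _ r := (((hlin.add hlog).add hrat).add harctan).sub_const
    (2 * M * Real.arctan ((Cc - 1) * M / rplus M a))
  convert hsum using 1
  simp only [id, Pi.div_apply, Pi.sub_apply, Pi.pow_apply]
  field_simp
  ring

lemma two_mul_div_sq_add_sq_le_inv (k : ℝ) {r : ℝ} (hr : 0 < r) :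
    2 * k / (r ^ 2 + k ^ 2) ≤ r⁻¹ := by
  rw [div_le_iff₀ (by positivity)]
  field_simp
  nlinarith [sq_nonneg (r - k)]

lemma two_add_three_mul_div_le_deriv_hKerr {M : ℝ} (hM : 0 < M) (a Cc : ℝ) {r : ℝ}
    (hr : rplus M a ≤ r) : 2 + 3 * M / r ≤ deriv (hKerr M a Cc) r := by
  have hrp := rplus_pos hM a
  have hr0 : 0 < r := hrp.trans_le hr
  rw [(hasDerivAt_hKerr M a Cc hrp.ne' hr0.ne').deriv]
  have harctan : 2 * M * ((Cc - 1) * M) / (r ^ 2 + ((Cc - 1) * M) ^ 2) ≤ M / r := by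
    rw [show 2 * M * ((Cc - 1) * M) / (r ^ 2 + ((Cc - 1) * M) ^ 2)
        = M * (2 * ((Cc - 1) * M) / (r ^ 2 + ((Cc - 1) * M) ^ 2)) by ring, div_eq_mul_inv M r]
    exact mul_le_mul_of_nonneg_left (two_mul_div_sq_add_sq_le_inv _ hr0) hM.le
  have hrat : 0 ≤ 6 * M ^ 2 * (r - rplus M a) / r ^ 3 :=
    div_nonneg (mul_nonneg (by positivity) (sub_nonneg.2 hr)) (by positivity)
  have hsplit : 4 * M / r = 3 * M / r + M / r := by ring
  linarith

theorem hKerr_deriv_lower_bound_general (M a Cc : ℝ) (hM : 0 < M) :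
    ∀ r, rplus M a ≤ r →
      1 + 3 * M / r < deriv (hKerr M a Cc) r - a ^ 2 / (a ^ 2 + r ^ 2) ∧
      0 < deriv (hKerr M a Cc) r := by
  intro r hr
  have hr0 : 0 < r := (rplus_pos hM a).trans_le hr
  have hderiv := two_add_three_mul_div_le_deriv_hKerr hM a Cc hr
  have hfrac : a ^ 2 / (a ^ 2 + r ^ 2) < 1 := by
    rw [div_lt_one (by positivity)]
    linarith [pow_pos hr0 2]
  have hMr : 0 < 3 * M / r := by positivity
  constructor <;> linarith

/-- Strict lower bound `h′(r) − a²/(a² + r²) > 1 + 3M/r` for `r ≥ r₊`; in particular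
`h′(r) > 0` there. -/
theorem hKerr_deriv_lower_bound (M a Cc : ℝ) (hM : 0 < M) (ha : |a| < M) (hCc : 1 ≤ Cc) :
    ∀ r, rplus M a ≤ r →
      1 + 3 * M / r < deriv (hKerr M a Cc) r - a ^ 2 / (a ^ 2 + r ^ 2) ∧
      0 < deriv (hKerr M a Cc) r :=
  hKerr_deriv_lower_bound_general M a Cc hM
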